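/- Let f : ℤ → ℂ and let n ≥ 1. Assume the Toeplitz matrices T_n(f) and T_{n+1}(f) are invertible. Then U⁺_n − U⁺_{n+1} = Ũ⁻_n · U⁻_{n+1}, where U⁺_m is the first component of T_m(f)^{−1} f⁺ (with f⁺ of length m), U⁻_m is its last component, and Ũ⁻_m is the last component of (T_m(f)ᵀ)^{−1} f̃⁺. -/

import Mathlib

open scoped BigOperators
open Matrix

/-- The `m × m` Toeplitz matrix `T_m(f)` with `(i,j)` entry `f(i-j)`. -/
noncomputable def Tmat (f : ℤ → ℂ) (m : ℕ) : Matrix (Fin m) (Fin m) ℂ :=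
  Matrix.of fun i j : Fin m => f (((i : ℕ) : ℤ) - ((j : ℕ) : ℤ))

/-- The vector `f⁺ = (f(1), …, f(m))`. -/
def fplus (f : ℤ → ℂ) (m : ℕ) : Fin m → ℂ := fun i => f (((i : ℕ) : ℤ) + 1)

/-- The vector `f̃⁺ = (f(-1), …, f(-m))`. -/
def ftplus (f : ℤ → ℂ) (m : ℕ) : Fin m → ℂ := fun i => f (-(((i : ℕ) : ℤ) + 1))

/-! Write `x = T_{n+1}⁻¹ f⁺`. The first `n` equations of `T_{n+1} x = f⁺` read
`T_n x' = f⁺ - x_n g`, where `g = (f(-n), …, f(-1))` is the truncated last column of `T_{n+1}`,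
so `U⁺_n - U⁺_{n+1} = U⁻_{n+1} (T_n⁻¹ g)_0`. A Toeplitz matrix is persymmetric,
`T_nᵀ = J T_n J` for the reversal `J`, and `J g = f̃⁺`; hence `T_n⁻¹ g = J (T_nᵀ)⁻¹ f̃⁺`,
whose first entry is `Ũ⁻_n`. -/

section LinearSystems

variable {R : Type*} [CommRing R] {n : ℕ}

theorem mulVec_apply_castSucc (B : Matrix (Fin (n + 1)) (Fin (n + 1)) R)
    (x : Fin (n + 1) → R) (i : Fin n) :
    (B *ᵥ x) i.castSucc = (B.submatrix Fin.castSucc Fin.castSucc *ᵥ (x ∘ Fin.castSucc)) i +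
      x (Fin.last n) * B i.castSucc (Fin.last n) := by
  simp [mulVec, dotProduct, Fin.sum_univ_castSucc, mul_comm]

theorem inv_mulVec_comp_castSucc {B : Matrix (Fin (n + 1)) (Fin (n + 1)) R} (hB : IsUnit B)
    (hA : IsUnit (B.submatrix Fin.castSucc Fin.castSucc)) (b : Fin (n + 1) → R) :
    (B⁻¹ *ᵥ b) ∘ Fin.castSucc =
      (B.submatrix Fin.castSucc Fin.castSucc)⁻¹ *ᵥ (b ∘ Fin.castSucc) -
        (B⁻¹ *ᵥ b) (Fin.last n) •
          (B.submatrix Fin.castSucc Fin.castSucc)⁻¹ *ᵥ fun i => B i.castSucc (Fin.last n) := by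
  set A := B.submatrix Fin.castSucc Fin.castSucc
  set x := B⁻¹ *ᵥ b
  have hx : B *ᵥ x = b := by
    rw [mulVec_mulVec, mul_nonsing_inv _ ((isUnit_iff_isUnit_det B).1 hB), one_mulVec]
  have hAx : A *ᵥ (x ∘ Fin.castSucc) + x (Fin.last n) • (fun i => B i.castSucc (Fin.last n)) =
      b ∘ Fin.castSucc := by
    funext i
    simp [← hx, mulVec_apply_castSucc, A]
  rw [← hAx, mulVec_add, mulVec_smul, mulVec_mulVec,
    nonsing_inv_mul _ ((isUnit_iff_isUnit_det A).1 hA), one_mulVec, add_sub_cancel_right]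

theorem inv_mulVec_comp_rev {A : Matrix (Fin n) (Fin n) R}
    (hpersym : Aᵀ = A.submatrix Fin.rev Fin.rev) (v : Fin n → R) :
    A⁻¹ *ᵥ (v ∘ Fin.rev) = (Aᵀ⁻¹ *ᵥ v) ∘ Fin.rev := by
  have hrev : A.submatrix Fin.rev Fin.rev = A.submatrix Fin.revPerm Fin.revPerm := rfl
  rw [hpersym, hrev, inv_submatrix_equiv, submatrix_mulVec_equiv, Fin.revPerm_symm]
  funext i
  simp [Function.comp_def]

end LinearSystems

section Toeplitz

variable (f : ℤ → ℂ)

theorem Tmat_succ_submatrix_castSucc (n : ℕ) :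
    (Tmat f (n + 1)).submatrix Fin.castSucc Fin.castSucc = Tmat f n :=
  rfl

theorem fplus_succ_comp_castSucc (n : ℕ) : fplus f (n + 1) ∘ Fin.castSucc = fplus f n :=
  rfl

theorem Tmat_succ_castSucc_last (n : ℕ) (i : Fin n) :
    Tmat f (n + 1) i.castSucc (Fin.last n) = ftplus f n i.rev := by
  simp only [Tmat, ftplus, of_apply, Fin.val_castSucc, Fin.val_last, Fin.val_rev]
  congr 1
  omega

theorem Tmat_transpose (m : ℕ) : (Tmat f m)ᵀ = (Tmat f m).submatrix Fin.rev Fin.rev := by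
  ext i j
  simp only [Tmat, transpose_apply, submatrix_apply, of_apply, Fin.val_rev]
  congr 1
  omega

end Toeplitz

theorem toeplitz_UU_identity (f : ℤ → ℂ) (n : ℕ) (hn : 1 ≤ n)
    (h1 : IsUnit (Tmat f n)) (h2 : IsUnit (Tmat f (n + 1))) :
    ((Tmat f n)⁻¹ *ᵥ fplus f n) ⟨0, by omega⟩ -
        ((Tmat f (n + 1))⁻¹ *ᵥ fplus f (n + 1)) ⟨0, by omega⟩ =
      (((Tmat f n)ᵀ)⁻¹ *ᵥ ftplus f n) ⟨n - 1, by omega⟩ *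
        ((Tmat f (n + 1))⁻¹ *ᵥ fplus f (n + 1)) ⟨n, by omega⟩ := by
  have hcol : (fun i : Fin n => Tmat f (n + 1) i.castSucc (Fin.last n)) = ftplus f n ∘ Fin.rev :=
    funext (Tmat_succ_castSucc_last f n)
  have hsub := inv_mulVec_comp_castSucc h2 (by rwa [Tmat_succ_submatrix_castSucc]) (fplus f (n + 1))
  rw [Tmat_succ_submatrix_castSucc, fplus_succ_comp_castSucc, hcol,
    inv_mulVec_comp_rev (Tmat_transpose f n)] at hsub
  have hrev : Fin.rev (⟨0, by omega⟩ : Fin n) = ⟨n - 1, by omega⟩ := by ext; simp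
  have hfirst := congrFun hsub ⟨0, by omega⟩
  simp only [Function.comp_apply, Pi.sub_apply, Pi.smul_apply, smul_eq_mul, hrev,
    Fin.castSucc_mk, Fin.last] at hfirst
  linear_combination -hfirst
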